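/- arXiv:0901.4825 — 2 statements merged into one kernel-verified Lean document; each statement's English description precedes it below -/
import Mathlib

section
/- Extended Schwarz inequality: Let 𝓕 be a filter on ℕ. For all ψ, χ ∈ S_𝓕(ℝ), |⟨ψ, χ⟩| ≤ sqrt(⟨ψ, ψ⟩) · sqrt(⟨χ, χ⟩) in ℝ_𝓕, where u ≤ v means v − u ∈ ℝ⁺_𝓕, |·| : ℂ_𝓕 → ℝ_𝓕 is the componentwise absolute value, sqrt : ℝ_𝓕 → ℝ_𝓕 is induced componentwise by Real.sqrt, and ⟨ψ,ψ⟩, ⟨χ,χ⟩ are regarded as elements of ℝ_𝓕 (which is possible since they lie in ℝ⁺_𝓕). -/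
open Filter

noncomputable section

/-- The indicator function of the interval `[a, b)` with values in `ℂ_𝓕`. -/
def ind (𝓕 : Filter ℕ) (a b : ℝ) : ℝ → Filter.Germ 𝓕 ℂ :=
  (Set.Ico a b).indicator 1

/-- `S_𝓕(ℝ)`: the `ℂ_𝓕`-module of step functions `ℝ → ℂ_𝓕`, i.e. the span of the
indicator functions of half-open intervals. -/
def StepF (𝓕 : Filter ℕ) : Submodule (Filter.Germ 𝓕 ℂ) (ℝ → Filter.Germ 𝓕 ℂ) :=
  Submodule.span (Filter.Germ 𝓕 ℂ) {f | ∃ a b : ℝ, f = ind 𝓕 a b}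

lemma ind_mem (𝓕 : Filter ℕ) (a b : ℝ) : ind 𝓕 a b ∈ StepF 𝓕 :=
  Submodule.subset_span ⟨a, b, rfl⟩

lemma smul_ind_mem (𝓕 : Filter ℕ) (γ : Filter.Germ 𝓕 ℂ) (a b : ℝ) :
    γ • ind 𝓕 a b ∈ StepF 𝓕 :=
  (StepF 𝓕).smul_mem γ (ind_mem 𝓕 a b)

/-- Componentwise complex conjugation on `ℂ_𝓕`. -/
def conjG (𝓕 : Filter ℕ) : Filter.Germ 𝓕 ℂ → Filter.Germ 𝓕 ℂ :=
  Filter.Germ.map (starRingEnd ℂ)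

lemma conjG_zero (𝓕 : Filter ℕ) : conjG 𝓕 0 = 0 := by
  simp only [conjG, ← Filter.Germ.coe_zero, Filter.Germ.map_coe, Function.comp_def]
  exact congrArg _ (funext fun _ => by simp)

lemma conjG_one (𝓕 : Filter ℕ) : conjG 𝓕 1 = 1 := by
  simp only [conjG, ← Filter.Germ.coe_one, Filter.Germ.map_coe, Function.comp_def]
  exact congrArg _ (funext fun _ => by simp)

lemma conjG_add (𝓕 : Filter ℕ) (x y : Filter.Germ 𝓕 ℂ) :
    conjG 𝓕 (x + y) = conjG 𝓕 x + conjG 𝓕 y := by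
  induction x using Filter.Germ.inductionOn with
  | h f => induction y using Filter.Germ.inductionOn with
    | h g =>
      simp only [conjG, ← Filter.Germ.coe_add, Filter.Germ.map_coe, Function.comp_def]
      exact congrArg _ (funext fun _ => by simp)

lemma conjG_mul (𝓕 : Filter ℕ) (x y : Filter.Germ 𝓕 ℂ) :
    conjG 𝓕 (x * y) = conjG 𝓕 x * conjG 𝓕 y := by
  induction x using Filter.Germ.inductionOn with
  | h f => induction y using Filter.Germ.inductionOn with
    | h g =>
      simp only [conjG, ← Filter.Germ.coe_mul, Filter.Germ.map_coe, Function.comp_def]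
      exact congrArg _ (funext fun _ => by simp)

/-- Conjugation of a function `ℝ → ℂ_𝓕`, pointwise. -/
def conjF (𝓕 : Filter ℕ) (f : ℝ → Filter.Germ 𝓕 ℂ) : ℝ → Filter.Germ 𝓕 ℂ :=
  fun x => conjG 𝓕 (f x)

lemma conjF_mem (𝓕 : Filter ℕ) {f : ℝ → Filter.Germ 𝓕 ℂ} (hf : f ∈ StepF 𝓕) :
    conjF 𝓕 f ∈ StepF 𝓕 := by
  induction hf using Submodule.span_induction with
  | mem f hf =>
    obtain ⟨a, b, rfl⟩ := hf
    have : conjF 𝓕 (ind 𝓕 a b) = ind 𝓕 a b := by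
      funext x
      by_cases hx : x ∈ Set.Ico a b <;>
        simp [conjF, ind, Set.indicator, hx, conjG_one, conjG_zero]
    rw [this]; exact ind_mem 𝓕 a b
  | zero =>
    have : conjF 𝓕 (0 : ℝ → Filter.Germ 𝓕 ℂ) = 0 := by
      funext x; simp [conjF, conjG_zero]
    rw [this]; exact (StepF 𝓕).zero_mem
  | add f g hf hg ihf ihg =>
    have : conjF 𝓕 (f + g) = conjF 𝓕 f + conjF 𝓕 g := by
      funext x; simp [conjF, conjG_add]
    rw [this]; exact (StepF 𝓕).add_mem ihf ihg
  | smul c f hf ihf =>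
    have : conjF 𝓕 (c • f) = conjG 𝓕 c • conjF 𝓕 f := by
      funext x; simp [conjF, conjG_mul, Pi.smul_apply, smul_eq_mul]
    rw [this]; exact (StepF 𝓕).smul_mem _ ihf

lemma mul_mem_step (𝓕 : Filter ℕ) {f g : ℝ → Filter.Germ 𝓕 ℂ}
    (hf : f ∈ StepF 𝓕) (hg : g ∈ StepF 𝓕) : f * g ∈ StepF 𝓕 := by
  induction hf using Submodule.span_induction with
  | mem f hf =>
    obtain ⟨a, b, rfl⟩ := hf
    induction hg using Submodule.span_induction with
    | mem g hg =>
      obtain ⟨c, d, rfl⟩ := hg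
      have : ind 𝓕 a b * ind 𝓕 c d = ind 𝓕 (a ⊔ c) (b ⊓ d) := by
        simp only [ind, ← Set.inter_indicator_one, Set.Ico_inter_Ico]
      rw [this]; exact ind_mem 𝓕 _ _
    | zero => rw [mul_zero]; exact (StepF 𝓕).zero_mem
    | add g g' hg hg' ihg ihg' => rw [mul_add]; exact (StepF 𝓕).add_mem ihg ihg'
    | smul c g hg ihg => rw [mul_smul_comm]; exact (StepF 𝓕).smul_mem _ ihg
  | zero => rw [zero_mul]; exact (StepF 𝓕).zero_mem
  | add f f' hf hf' ihf ihf' => rw [add_mul]; exact (StepF 𝓕).add_mem ihf ihf'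
  | smul c f hf ihf => rw [smul_mul_assoc]; exact (StepF 𝓕).smul_mem _ ihf

/-- A linear map `StepF 𝓕 → ℂ_𝓕` is "the integral" iff it sends every step
function `γ·1_{[a,b)}` (with `a ≤ b`) to `(b − a)·γ`. -/
def IsStepIntegral (𝓕 : Filter ℕ)
    (I : StepF 𝓕 →ₗ[Filter.Germ 𝓕 ℂ] Filter.Germ 𝓕 ℂ) : Prop :=
  ∀ (a b : ℝ), a ≤ b → ∀ γ : Filter.Germ 𝓕 ℂ,
    I ⟨γ • ind 𝓕 a b, smul_ind_mem 𝓕 γ a b⟩ =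
      (Filter.Germ.const ((b - a : ℝ) : ℂ) : Filter.Germ 𝓕 ℂ) * γ

/-- The scalar product on `S_𝓕(ℝ)`: `⟨ψ, χ⟩ = ∫ conj(ψ(x))·χ(x) dx`. -/
def innerS (𝓕 : Filter ℕ) (I : StepF 𝓕 →ₗ[Filter.Germ 𝓕 ℂ] Filter.Germ 𝓕 ℂ)
    (ψ χ : StepF 𝓕) : Filter.Germ 𝓕 ℂ :=
  I ⟨conjF 𝓕 (ψ : ℝ → Filter.Germ 𝓕 ℂ) * (χ : ℝ → Filter.Germ 𝓕 ℂ),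
     mul_mem_step 𝓕 (conjF_mem 𝓕 ψ.2) χ.2⟩

/-- The canonical embedding `ℝ_𝓕 → ℂ_𝓕`, induced componentwise by `ℝ ⊆ ℂ`. -/
def toC (𝓕 : Filter ℕ) : Filter.Germ 𝓕 ℝ → Filter.Germ 𝓕 ℂ :=
  Filter.Germ.map fun x : ℝ => (x : ℂ)

/-- `ℝ⁺_𝓕`: the set of germs of sequences nonnegative on a set of the filter. -/
def RplusGerm (𝓕 : Filter ℕ) : Set (Filter.Germ 𝓕 ℝ) :=
  {u : Filter.Germ 𝓕 ℝ | u.LiftPred fun x : ℝ => 0 ≤ x}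

/-- The order on `ℝ_𝓕`: `u ≤ v` iff `v - u ∈ ℝ⁺_𝓕`. -/
def leGerm (𝓕 : Filter ℕ) (u v : Filter.Germ 𝓕 ℝ) : Prop :=
  v - u ∈ RplusGerm 𝓕

/-- The componentwise absolute value `|·| : ℂ_𝓕 → ℝ_𝓕`. -/
def absG (𝓕 : Filter ℕ) : Filter.Germ 𝓕 ℂ → Filter.Germ 𝓕 ℝ :=
  Filter.Germ.map fun z : ℂ => ‖z‖

/-- The componentwise square root `ℝ_𝓕 → ℝ_𝓕`. -/
def sqrtG (𝓕 : Filter ℕ) : Filter.Germ 𝓕 ℝ → Filter.Germ 𝓕 ℝ :=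
  Filter.Germ.map Real.sqrt

/-!
Write a step function as `∑ γᵢ • 1_{[aᵢ, bᵢ)}` and pick representatives `cᵢ : ℕ → ℂ` of the
coefficients. For each `n` this gives an ordinary step function `ℝ → ℂ`, and since the
integral is determined on the generators, `⟨ψ, χ⟩` is the germ of the sequence of the `L²(ℝ)`
scalar products of these representatives. The extended inequality is then the classical
Cauchy–Schwarz inequality in `L²(ℝ)`, applied at every index `n`.
-/

open MeasureTheory
open scoped ENNReal

section CauchySchwarz

variable {α 𝕜 E : Type*} [RCLike 𝕜] [NormedAddCommGroup E] [InnerProductSpace 𝕜 E]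
  [MeasurableSpace α] {μ : Measure α}

lemma integral_inner_self_eq (f : α → E) :
    ∫ a, inner 𝕜 (f a) (f a) ∂μ = ((∫ a, ‖f a‖ ^ 2 ∂μ : ℝ) : 𝕜) := by
  simp_rw [inner_self_eq_norm_sq_to_K]
  exact_mod_cast integral_ofReal (𝕜 := 𝕜)

lemma MeasureTheory.MemLp.inner_toLp {f g : α → E} (hf : MemLp f 2 μ) (hg : MemLp g 2 μ) :
    inner 𝕜 (hf.toLp f) (hg.toLp g) = ∫ a, inner 𝕜 (f a) (g a) ∂μ := by
  rw [L2.inner_def]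
  refine integral_congr_ae ?_
  filter_upwards [hf.coeFn_toLp, hg.coeFn_toLp] with a hfa hga
  rw [hfa, hga]

theorem norm_integral_inner_le {f g : α → E} (hf : MemLp f 2 μ) (hg : MemLp g 2 μ) :
    ‖∫ a, inner 𝕜 (f a) (g a) ∂μ‖ ≤ √(∫ a, ‖f a‖ ^ 2 ∂μ) * √(∫ a, ‖g a‖ ^ 2 ∂μ) := by
  have norm_toLp : ∀ {h : α → E} (hh : MemLp h 2 μ), ‖hh.toLp h‖ = √(∫ a, ‖h a‖ ^ 2 ∂μ) := by
    intro h hh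
    rw [eq_comm, Real.sqrt_eq_iff_eq_sq (integral_nonneg fun _ => sq_nonneg _) (norm_nonneg _),
      ← RCLike.ofReal_inj (K := 𝕜), RCLike.ofReal_pow, ← inner_self_eq_norm_sq_to_K,
      hh.inner_toLp hh, integral_inner_self_eq]
  rw [← hf.inner_toLp hg, ← norm_toLp hf, ← norm_toLp hg]
  exact norm_inner_le_norm _ _

end CauchySchwarz

section StepFunction

variable {ι E : Type*} [Fintype ι]

def stepFun [AddCommMonoid E] (a b : ι → ℝ) (c : ι → E) (x : ℝ) : E :=
  ∑ i, (Set.Ico (a i) (b i)).indicator (fun _ => c i) x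

lemma memLp_stepFun [NormedAddCommGroup E] (a b : ι → ℝ) (c : ι → E) (p : ℝ≥0∞) :
    MemLp (stepFun a b c) p volume :=
  memLp_finsetSum _ fun i _ => memLp_indicator_const p measurableSet_Ico _
    (Or.inr (by simp [Real.volume_Ico]))

lemma integral_stepFun [NormedAddCommGroup E] [NormedSpace ℝ E]
    [CompleteSpace E] (a b : ι → ℝ) (c : ι → E) :
    ∫ x, stepFun a b c x = ∑ i, max (b i - a i) 0 • c i := by
  unfold stepFun
  rw [integral_finsetSum]
  · simp only [integral_indicator_const _ measurableSet_Ico, Real.volume_real_Ico]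
  · exact fun i _ => (integrable_indicator_iff measurableSet_Ico).2
      (integrableOn_const (by simp [Real.volume_Ico]))

lemma star_stepFun_mul_stepFun {κ R : Type*} [Fintype κ] [NonUnitalNonAssocSemiring R]
    [StarAddMonoid R] (a b : ι → ℝ) (c : ι → R) (a' b' : κ → ℝ) (c' : κ → R) (x : ℝ) :
    star (stepFun a b c x) * stepFun a' b' c' x =
      stepFun (fun p : ι × κ => a p.1 ⊔ a' p.2) (fun p => b p.1 ⊓ b' p.2)
        (fun p => star (c p.1) * c' p.2) x := by
  simp only [stepFun, star_sum, Finset.sum_mul_sum, ← Finset.univ_product_univ, Finset.sum_product]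
  refine Finset.sum_congr rfl fun i _ => Finset.sum_congr rfl fun j _ => ?_
  simp only [← Set.Ico_inter_Ico, Set.indicator_apply, Set.mem_inter_iff]
  split_ifs <;> simp_all

end StepFunction

section GermEmbedding

variable {𝓕 : Filter ℕ}

lemma toC_coe (x : ℕ → ℝ) : toC 𝓕 ↑x = ↑(fun n => (x n : ℂ)) :=
  Germ.map_coe _ _

lemma toC_injective : Function.Injective (toC 𝓕) := by
  intro u v huv
  induction u using Germ.inductionOn
  induction v using Germ.inductionOn
  rw [toC_coe, toC_coe, Germ.coe_eq] at huv
  exact Germ.coe_eq.2 (huv.mono fun n hn => Complex.ofReal_injective hn)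

lemma leGerm_absG_sqrtG_mul_sqrtG {z : ℕ → ℂ} {x y : ℕ → ℝ}
    (h : ∀ᶠ n in 𝓕, ‖z n‖ ≤ √(x n) * √(y n)) :
    leGerm 𝓕 (absG 𝓕 ↑z) (sqrtG 𝓕 ↑x * sqrtG 𝓕 ↑y) := by
  rw [leGerm, RplusGerm, Set.mem_ofPred_eq, absG, sqrtG, Germ.map_coe, Germ.map_coe, Germ.map_coe,
    ← Germ.coe_mul, ← Germ.coe_sub, Germ.liftPred_coe]
  exact h.mono fun n hn => sub_nonneg.2 hn

end GermEmbedding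

section StepGerm

variable {𝓕 : Filter ℕ} {ι κ : Type*} [Fintype ι] [Fintype κ]

lemma sum_smul_ind_apply (a b : ι → ℝ) (c : ι → ℕ → ℂ) (x : ℝ) :
    (∑ i, (c i : Germ 𝓕 ℂ) • ind 𝓕 (a i) (b i)) x = ↑(fun n => stepFun a b (c · n) x) := by
  have smul_ind_apply : ∀ i, ((c i : Germ 𝓕 ℂ) • ind 𝓕 (a i) (b i)) x =
      ↑(fun n => (Set.Ico (a i) (b i)).indicator (fun _ => c i n) x) := by
    intro i
    by_cases hx : x ∈ Set.Ico (a i) (b i)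
    · simp [ind, hx]
    · simp only [ind, Pi.smul_apply, hx, not_false_eq_true, Set.indicator_of_notMem,
        smul_eq_mul, mul_zero]
      rfl
  rw [Finset.sum_apply, Finset.sum_congr rfl fun i _ => smul_ind_apply i, ← Germ.coe_sum]
  congr 1
  ext n
  simp only [stepFun, Finset.sum_apply]

lemma exists_eq_sum_smul_ind {f : ℝ → Germ 𝓕 ℂ} (hf : f ∈ StepF 𝓕) :
    ∃ (m : ℕ) (a b : Fin m → ℝ) (c : Fin m → ℕ → ℂ),
      f = ∑ i, (c i : Germ 𝓕 ℂ) • ind 𝓕 (a i) (b i) := by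
  obtain ⟨m, γ, g, rfl⟩ := Submodule.mem_span_set'.mp hf
  choose a b hab using fun i => (g i).2
  have hrep : ∀ i, ∃ c : ℕ → ℂ, (c : Germ 𝓕 ℂ) = γ i := fun i => Quot.exists_rep (γ i)
  choose c hc using hrep
  exact ⟨m, a, b, c, Finset.sum_congr rfl fun i _ => by rw [hc, hab]⟩

lemma conjF_sum_smul_ind_mul (a b : ι → ℝ) (c : ι → ℕ → ℂ) (a' b' : κ → ℝ) (c' : κ → ℕ → ℂ) :
    conjF 𝓕 (∑ i, (c i : Germ 𝓕 ℂ) • ind 𝓕 (a i) (b i)) *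
        ∑ j, (c' j : Germ 𝓕 ℂ) • ind 𝓕 (a' j) (b' j) =
      ∑ p : ι × κ, (↑(fun n => star (c p.1 n) * c' p.2 n) : Germ 𝓕 ℂ) •
        ind 𝓕 (a p.1 ⊔ a' p.2) (b p.1 ⊓ b' p.2) := by
  ext1 x
  rw [Pi.mul_apply, conjF, sum_smul_ind_apply, sum_smul_ind_apply, sum_smul_ind_apply, conjG,
    Germ.map_coe, ← Germ.coe_mul]
  exact congrArg _ (funext fun n => star_stepFun_mul_stepFun ..)

variable {I : StepF 𝓕 →ₗ[Germ 𝓕 ℂ] Germ 𝓕 ℂ}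

lemma IsStepIntegral.apply_smul_ind (hI : IsStepIntegral 𝓕 I) (a b : ℝ) (γ : Germ 𝓕 ℂ) :
    I ⟨γ • ind 𝓕 a b, smul_ind_mem 𝓕 γ a b⟩ = Germ.const ((max (b - a) 0 : ℝ) : ℂ) * γ := by
  rcases le_total a b with hab | hba
  · rw [hI a b hab, max_eq_left (sub_nonneg.2 hab)]
  · have hzero : (⟨γ • ind 𝓕 a b, smul_ind_mem 𝓕 γ a b⟩ : StepF 𝓕) = 0 := by
      ext1
      rw [Submodule.coe_mk, ind, Set.Ico_eq_empty_of_le hba, Set.indicator_empty', smul_zero]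
      rfl
    rw [hzero, map_zero, max_eq_right (sub_nonpos.2 hba), Complex.ofReal_zero]
    exact (zero_mul γ).symm

lemma IsStepIntegral.apply_eq_integral_stepFun (hI : IsStepIntegral 𝓕 I) {f : ℝ → Germ 𝓕 ℂ}
    (hf : f ∈ StepF 𝓕) {a b : ι → ℝ} {c : ι → ℕ → ℂ}
    (hfabc : f = ∑ i, (c i : Germ 𝓕 ℂ) • ind 𝓕 (a i) (b i)) :
    I ⟨f, hf⟩ = ↑(fun n => ∫ x, stepFun a b (c · n) x) := by
  subst hfabc
  have hsplit : (⟨_, hf⟩ : StepF 𝓕) = ∑ i, ⟨_, smul_ind_mem 𝓕 (c i) (a i) (b i)⟩ := by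
    ext1
    simp only [AddSubmonoidClass.coe_finsetSum]
  simp_rw [hsplit, map_sum, hI.apply_smul_ind, integral_stepFun, Complex.real_smul]
  rw [← Finset.sum_fn, Germ.coe_sum]
  rfl

lemma innerS_eq_integral_inner (hI : IsStepIntegral 𝓕 I) {ψ χ : StepF 𝓕}
    {a b : ι → ℝ} {c : ι → ℕ → ℂ} {a' b' : κ → ℝ} {c' : κ → ℕ → ℂ}
    (hψ : (ψ : ℝ → Germ 𝓕 ℂ) = ∑ i, (c i : Germ 𝓕 ℂ) • ind 𝓕 (a i) (b i))
    (hχ : (χ : ℝ → Germ 𝓕 ℂ) = ∑ j, (c' j : Germ 𝓕 ℂ) • ind 𝓕 (a' j) (b' j)) :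
    innerS 𝓕 I ψ χ =
      ↑(fun n => ∫ x, inner ℂ (stepFun a b (c · n) x) (stepFun a' b' (c' · n) x)) := by
  rw [innerS, hI.apply_eq_integral_stepFun _ (by rw [hψ, hχ, conjF_sum_smul_ind_mul])]
  simp_rw [RCLike.inner_apply', starRingEnd_apply, star_stepFun_mul_stepFun]

lemma eq_integral_norm_sq_of_toC_eq_innerS_self (hI : IsStepIntegral 𝓕 I) {ψ : StepF 𝓕}
    {a b : ι → ℝ} {c : ι → ℕ → ℂ}
    (hψ : (ψ : ℝ → Germ 𝓕 ℂ) = ∑ i, (c i : Germ 𝓕 ℂ) • ind 𝓕 (a i) (b i))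
    {u : Germ 𝓕 ℝ} (hu : toC 𝓕 u = innerS 𝓕 I ψ ψ) :
    u = ↑(fun n => ∫ x, ‖stepFun a b (c · n) x‖ ^ 2) := by
  refine toC_injective ?_
  simp_rw [hu, innerS_eq_integral_inner hI hψ hψ, toC_coe, integral_inner_self_eq]
  rfl

end StepGerm

/-- extended Schwarz inequality: for all `ψ, χ ∈ S_𝓕(ℝ)`,
`|⟨ψ, χ⟩| ≤ sqrt(⟨ψ, ψ⟩) · sqrt(⟨χ, χ⟩)` in `ℝ_𝓕`; here `⟨ψ,ψ⟩` and `⟨χ,χ⟩` are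
regarded as elements `u, v` of `ℝ_𝓕` via the embedding `ℝ_𝓕 → ℂ_𝓕`. -/
theorem stmt_11 (𝓕 : Filter ℕ)
    (I : StepF 𝓕 →ₗ[Filter.Germ 𝓕 ℂ] Filter.Germ 𝓕 ℂ) (hI : IsStepIntegral 𝓕 I)
    (ψ χ : StepF 𝓕) (u v : Filter.Germ 𝓕 ℝ)
    (hu : toC 𝓕 u = innerS 𝓕 I ψ ψ) (hv : toC 𝓕 v = innerS 𝓕 I χ χ) :
    leGerm 𝓕 (absG 𝓕 (innerS 𝓕 I ψ χ)) (sqrtG 𝓕 u * sqrtG 𝓕 v) := by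
  obtain ⟨m, a, b, c, hψ⟩ := exists_eq_sum_smul_ind ψ.2
  obtain ⟨m', a', b', c', hχ⟩ := exists_eq_sum_smul_ind χ.2
  rw [eq_integral_norm_sq_of_toC_eq_innerS_self hI hψ hu,
    eq_integral_norm_sq_of_toC_eq_innerS_self hI hχ hv, innerS_eq_integral_inner hI hψ hχ]
  exact leGerm_absG_sqrtG_mul_sqrtG <| .of_forall fun n =>
    norm_integral_inner_le (memLp_stepFun _ _ _ 2) (memLp_stepFun _ _ _ 2)

end
end

section
/- Extended Heisenberg Uncertainty Relation (Theorem 2.1): Let 𝓕 be a filter on ℕ, let A, B : S_𝓕(ℝ) → S_𝓕(ℝ) be Hermitian ℂ_𝓕-linear operators, and let ψ ∈ S_𝓕(ℝ) satisfy ⟨ψ, ψ⟩ = 1. Then Δ_ψA · Δ_ψB ≥ |⟨[A, B]⟩_ψ| / 2 in ℝ_𝓕, where [A, B] = A∘B − B∘A, Δ_ψA = sqrt(⟨A²⟩_ψ − (⟨A⟩_ψ)²) with sqrt : ℝ_𝓕 → ℝ_𝓕 induced componentwise by Real.sqrt (the argument lying in ℝ⁺_𝓕 ⊆ ℝ_𝓕),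 |·| : ℂ_𝓕 → ℝ_𝓕 is the componentwise absolute value, and u ≤ v means v − u ∈ ℝ⁺_𝓕. -/
open Filter

noncomputable section

/-- A `ℂ_𝓕`-linear operator on `S_𝓕(ℝ)` is Hermitian iff `⟨Aψ, χ⟩ = ⟨ψ, Aχ⟩`. -/
def IsHermitianOp (𝓕 : Filter ℕ) (I : StepF 𝓕 →ₗ[Filter.Germ 𝓕 ℂ] Filter.Germ 𝓕 ℂ)
    (A : StepF 𝓕 →ₗ[Filter.Germ 𝓕 ℂ] StepF 𝓕) : Prop :=
  ∀ ψ χ : StepF 𝓕, innerS 𝓕 I (A ψ) χ = innerS 𝓕 I ψ (A χ)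

/-! Centre the state: `φ = Aψ - ⟨A⟩ψ` and `χ = Bψ - ⟨B⟩ψ` have `⟨φ, φ⟩`, `⟨χ, χ⟩` equal to the
two variances, while `⟨ψ, [A, B]ψ⟩ = ⟨φ, χ⟩ - conj ⟨φ, χ⟩ = 2i Im ⟨φ, χ⟩`. On a common refinement
of the partitions of `φ` and `χ` the scalar product is a finite sum `∑ conj γₕ δₕ`, so at each index
`n ∈ ℕ` the claim is `|Im w| ≤ |w| ≤ ‖x‖ ‖y‖`, Cauchy–Schwarz in `ℂ^m`. -/

open ComplexConjugate in
lemma Complex.norm_sub_conj_sum_div_two_le {m : ℕ} (x y : Fin m → ℂ) :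
    ‖(∑ i, conj (x i) * y i) - conj (∑ i, conj (x i) * y i)‖ / 2 ≤
      √(∑ i, ‖x i‖ ^ 2) * √(∑ i, ‖y i‖ ^ 2) := by
  set w := ∑ i, conj (x i) * y i
  have cauchy_schwarz : ‖w‖ ≤ √(∑ i, ‖x i‖ ^ 2) * √(∑ i, ‖y i‖ ^ 2) := by
    simpa [w, EuclideanSpace.norm_eq, PiLp.inner_apply, mul_comm] using
      norm_inner_le_norm (𝕜 := ℂ) (WithLp.toLp 2 x) (WithLp.toLp 2 y)
  calc ‖w - conj w‖ / 2 = |w.im| := by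
        rw [Complex.sub_conj, norm_mul, Complex.norm_I, Complex.norm_real, Real.norm_eq_abs,
          abs_mul]
        norm_num
    _ ≤ ‖w‖ := Complex.abs_im_le_norm w
    _ ≤ _ := cauchy_schwarz

section

variable {𝓕 : Filter ℕ}

def conjRingHom (𝓕 : Filter ℕ) : Germ 𝓕 ℂ →+* Germ 𝓕 ℂ where
  toFun := conjG 𝓕
  map_one' := conjG_one 𝓕
  map_mul' := conjG_mul 𝓕
  map_zero' := conjG_zero 𝓕
  map_add' := conjG_add 𝓕

@[simp]
lemma conjRingHom_apply (z : Germ 𝓕 ℂ) : conjRingHom 𝓕 z = conjG 𝓕 z := rfl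

lemma conjG_coe (f : ℕ → ℂ) :
    conjG 𝓕 (f : Germ 𝓕 ℂ) = ↑(fun n => starRingEnd ℂ (f n)) :=
  Germ.map_coe _ f

lemma conjG_conjG (z : Germ 𝓕 ℂ) : conjG 𝓕 (conjG 𝓕 z) = z :=
  Germ.inductionOn z fun f => by simp only [conjG_coe, Complex.conj_conj]

lemma conjG_ofReal (r : ℝ) : conjG 𝓕 (↑(r : ℂ)) = ↑(r : ℂ) := by
  simp only [conjG, Germ.map_const, Complex.conj_ofReal]

lemma leGerm_coe_of_eventually_le {f g : ℕ → ℝ} (h : ∀ᶠ n in 𝓕, f n ≤ g n) :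
    leGerm 𝓕 (f : Germ 𝓕 ℝ) g := by
  simp only [leGerm, RplusGerm, ← Germ.coe_sub, Set.mem_ofPred_eq, Germ.liftPred_coe]
  exact h.mono fun n hn => sub_nonneg.2 hn

lemma ind_of_le {a b : ℝ} (h : b ≤ a) : ind 𝓕 a b = 0 := by
  rw [ind, Set.Ico_eq_empty_of_le h, Set.indicator_empty]
  rfl

lemma ind_add_ind {a b c : ℝ} (hab : a ≤ b) (hbc : b ≤ c) :
    ind 𝓕 a b + ind 𝓕 b c = ind 𝓕 a c := by
  rw [ind, ind, ind, ← Set.Ico_union_Ico_eq_Ico hab hbc,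
    Set.indicator_union_of_disjoint Set.Ico_disjoint_Ico_same]
  rfl

lemma ind_mul_ind (a b c d : ℝ) : ind 𝓕 a b * ind 𝓕 c d = ind 𝓕 (a ⊔ c) (b ⊓ d) := by
  simp only [ind, ← Set.inter_indicator_one, Set.Ico_inter_Ico]

def spanInd (𝓕 : Filter ℕ) (T : Set ℝ) : Submodule (Germ 𝓕 ℂ) (ℝ → Germ 𝓕 ℂ) :=
  Submodule.span (Germ 𝓕 ℂ) {f | ∃ a ∈ T, ∃ b ∈ T, f = ind 𝓕 a b}

lemma spanInd_mono : Monotone (spanInd 𝓕) := fun _ _ hST =>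
  Submodule.span_mono fun _ ⟨a, ha, b, hb, hf⟩ => ⟨a, hST ha, b, hST hb, hf⟩

lemma exists_finset_mem_spanInd {f : ℝ → Germ 𝓕 ℂ} (hf : f ∈ StepF 𝓕) :
    ∃ T : Finset ℝ, f ∈ spanInd 𝓕 T := by
  classical
  induction hf using Submodule.span_induction with
  | mem f hf =>
    obtain ⟨a, b, rfl⟩ := hf
    exact ⟨{a, b}, Submodule.subset_span ⟨a, by simp, b, by simp, rfl⟩⟩
  | zero => exact ⟨∅, Submodule.zero_mem _⟩
  | add f g _ _ hf hg =>
    obtain ⟨S, hS⟩ := hf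
    obtain ⟨T, hT⟩ := hg
    refine ⟨S ∪ T, Submodule.add_mem _ ?_ ?_⟩
    · exact spanInd_mono (by simp) hS
    · exact spanInd_mono (by simp) hT
  | smul c f _ hf =>
    obtain ⟨T, hT⟩ := hf
    exact ⟨T, Submodule.smul_mem _ c hT⟩

def partStep (𝓕 : Filter ℕ) {m : ℕ} (p : Fin (m + 1) → ℝ) (γ : Fin m → Germ 𝓕 ℂ) :
    ℝ → Germ 𝓕 ℂ :=
  ∑ h, γ h • ind 𝓕 (p h.castSucc) (p h.succ)

lemma spanInd_range_le {m : ℕ} {p : Fin (m + 1) → ℝ} (hp : Monotone p) :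
    spanInd 𝓕 (Set.range p) ≤
      Submodule.span (Germ 𝓕 ℂ) (Set.range fun h : Fin m => ind 𝓕 (p h.castSucc) (p h.succ)) := by
  set M := Submodule.span (Germ 𝓕 ℂ) (Set.range fun h : Fin m => ind 𝓕 (p h.castSucc) (p h.succ))
  have from_zero (j : Fin (m + 1)) : ind 𝓕 (p 0) (p j) ∈ M := by
    induction j using Fin.induction with
    | zero => rw [ind_of_le le_rfl]; exact M.zero_mem
    | succ i ih =>
      rw [← ind_add_ind (hp (Fin.zero_le _)) (hp i.castSucc_lt_succ.le)]
      exact M.add_mem ih (Submodule.subset_span ⟨i, rfl⟩)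
  refine Submodule.span_le.2 ?_
  rintro _ ⟨_, ⟨i, rfl⟩, _, ⟨j, rfl⟩, rfl⟩
  rcases le_or_gt (p j) (p i) with hji | hij
  · rw [SetLike.mem_coe, ind_of_le hji]; exact M.zero_mem
  · rw [SetLike.mem_coe, ← add_sub_cancel_left (ind 𝓕 (p 0) (p i)) (ind 𝓕 (p i) (p j)),
      ind_add_ind (hp (Fin.zero_le _)) hij.le]
    exact M.sub_mem (from_zero j) (from_zero i)

lemma exists_common_partition (φ χ : StepF 𝓕) :
    ∃ (m : ℕ) (p : Fin (m + 1) → ℝ), Monotone p ∧ ∃ γ δ : Fin m → Germ 𝓕 ℂ,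
      (φ : ℝ → Germ 𝓕 ℂ) = partStep 𝓕 p γ ∧ (χ : ℝ → Germ 𝓕 ℂ) = partStep 𝓕 p δ := by
  classical
  obtain ⟨S, hS⟩ := exists_finset_mem_spanInd φ.2
  obtain ⟨T, hT⟩ := exists_finset_mem_spanInd χ.2
  set U := insert 0 (S ∪ T)
  obtain ⟨m, hm⟩ := Nat.exists_eq_add_one_of_ne_zero (Finset.insert_nonempty 0 (S ∪ T)).card_ne_zero
  set p : Fin (m + 1) → ℝ := ⇑(U.orderEmbOfFin hm)
  have hp : Monotone p := (U.orderEmbOfFin hm).monotone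
  have hU : spanInd 𝓕 U ≤ spanInd 𝓕 (Set.range p) := by
    rw [Finset.range_orderEmbOfFin]
  have mem {f : ℝ → Germ 𝓕 ℂ} {V : Finset ℝ} (hV : V ⊆ U) (hf : f ∈ spanInd 𝓕 V) :
      ∃ γ, f = partStep 𝓕 p γ := by
    have := spanInd_range_le hp (hU (spanInd_mono (Finset.coe_subset.2 hV) hf))
    obtain ⟨γ, hγ⟩ := (Submodule.mem_span_range_iff_exists_fun _).1 this
    exact ⟨γ, hγ.symm⟩
  obtain ⟨γ, hγ⟩ := mem (Finset.subset_union_left.trans (Finset.subset_insert _ _)) hS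
  obtain ⟨δ, hδ⟩ := mem (Finset.subset_union_right.trans (Finset.subset_insert _ _)) hT
  exact ⟨m, p, hp, γ, δ, hγ, hδ⟩

lemma conjG_ind (a b x : ℝ) : conjG 𝓕 (ind 𝓕 a b x) = ind 𝓕 a b x := by
  by_cases hx : x ∈ Set.Ico a b <;> simp [ind, hx, conjG_one, conjG_zero]

lemma conjF_partStep {m : ℕ} (p : Fin (m + 1) → ℝ) (γ : Fin m → Germ 𝓕 ℂ) :
    conjF 𝓕 (partStep 𝓕 p γ) = partStep 𝓕 p fun h => conjG 𝓕 (γ h) := by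
  funext x
  simp only [conjF, partStep, Finset.sum_apply, Pi.smul_apply, smul_eq_mul, ← conjRingHom_apply,
    map_sum, map_mul]
  simp only [conjRingHom_apply, conjG_ind]

lemma ind_mul_ind_of_ne {m : ℕ} {p : Fin (m + 1) → ℝ} (hp : Monotone p) {h k : Fin m}
    (hhk : h ≠ k) : ind 𝓕 (p h.castSucc) (p h.succ) * ind 𝓕 (p k.castSucc) (p k.succ) = 0 := by
  rw [ind_mul_ind]
  apply ind_of_le
  rcases hhk.lt_or_gt with hlt | hlt
  · exact inf_le_left.trans ((hp (Fin.succ_le_castSucc_iff.2 hlt)).trans le_sup_right)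
  · exact inf_le_right.trans ((hp (Fin.succ_le_castSucc_iff.2 hlt)).trans le_sup_left)

lemma partStep_mul {m : ℕ} {p : Fin (m + 1) → ℝ} (hp : Monotone p) (γ δ : Fin m → Germ 𝓕 ℂ) :
    partStep 𝓕 p γ * partStep 𝓕 p δ = partStep 𝓕 p (γ * δ) := by
  rw [partStep, partStep, Finset.sum_mul_sum]
  refine Finset.sum_congr rfl fun h _ => ?_
  rw [Finset.sum_eq_single h, smul_mul_smul_comm, ind_mul_ind, sup_idem, inf_idem, Pi.mul_apply]
  · intro k _ hkh
    rw [smul_mul_smul_comm, ind_mul_ind_of_ne hp hkh.symm, smul_zero]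
  · exact fun hh => absurd (Finset.mem_univ h) hh

variable {I : StepF 𝓕 →ₗ[Germ 𝓕 ℂ] Germ 𝓕 ℂ}

lemma innerS_partStep (hI : IsStepIntegral 𝓕 I) {m : ℕ} {p : Fin (m + 1) → ℝ} (hp : Monotone p)
    {φ χ : StepF 𝓕} {γ δ : Fin m → Germ 𝓕 ℂ} (hφ : (φ : ℝ → Germ 𝓕 ℂ) = partStep 𝓕 p γ)
    (hχ : (χ : ℝ → Germ 𝓕 ℂ) = partStep 𝓕 p δ) :
    innerS 𝓕 I φ χ =
      ∑ h, Germ.const ((p h.succ - p h.castSucc : ℝ) : ℂ) * (conjG 𝓕 (γ h) * δ h) := by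
  have hsum : (⟨conjF 𝓕 φ * χ, mul_mem_step 𝓕 (conjF_mem 𝓕 φ.2) χ.2⟩ : StepF 𝓕) =
      ∑ h, ⟨(conjG 𝓕 (γ h) * δ h) • ind 𝓕 (p h.castSucc) (p h.succ), smul_ind_mem 𝓕 _ _ _⟩ := by
    apply Subtype.ext
    change conjF 𝓕 φ * χ = _
    rw [Submodule.coe_sum, hφ, hχ, conjF_partStep, partStep_mul hp]
    rfl
  rw [innerS, hsum, map_sum]
  exact Finset.sum_congr rfl fun h _ => hI _ _ (hp h.castSucc_lt_succ.le) _

lemma const_ofReal_mul_conjG_mul {r : ℝ} (hr : 0 ≤ r) (z w : Germ 𝓕 ℂ) :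
    Germ.const (r : ℂ) * (conjG 𝓕 z * w) =
      conjG 𝓕 (Germ.const (√r : ℂ) * z) * (Germ.const (√r : ℂ) * w) := by
  have hsq : (Germ.const (√r : ℂ) * Germ.const (√r : ℂ) : Germ 𝓕 ℂ) = Germ.const (r : ℂ) :=
    congrArg Germ.const (by simp only [← Complex.ofReal_mul, Real.mul_self_sqrt hr])
  rw [conjG_mul, conjG_ofReal, ← hsq]
  ring

-- Refine to a common partition and absorb the square roots of the interval lengths into the values.
lemma exists_innerS_eq_sum_conjG_mul (hI : IsStepIntegral 𝓕 I) (φ χ : StepF 𝓕) :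
    ∃ (m : ℕ) (γ δ : Fin m → Germ 𝓕 ℂ),
      innerS 𝓕 I φ φ = ∑ h, conjG 𝓕 (γ h) * γ h ∧
      innerS 𝓕 I χ χ = ∑ h, conjG 𝓕 (δ h) * δ h ∧
      innerS 𝓕 I φ χ = ∑ h, conjG 𝓕 (γ h) * δ h := by
  obtain ⟨m, p, hp, γ, δ, hφ, hχ⟩ := exists_common_partition φ χ
  have hℓ (h : Fin m) : 0 ≤ p h.succ - p h.castSucc := sub_nonneg.2 (hp h.castSucc_lt_succ.le)
  set s : Fin m → Germ 𝓕 ℂ := fun h => Germ.const (√(p h.succ - p h.castSucc) : ℂ)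
  refine ⟨m, s * γ, s * δ, ?_, ?_, ?_⟩ <;>
  · rw [innerS_partStep hI hp ‹_› ‹_›]
    exact Finset.sum_congr rfl fun h _ => const_ofReal_mul_conjG_mul (hℓ h) _ _

open ComplexConjugate in
lemma sum_conjG_coe_mul_coe {m : ℕ} (x y : Fin m → ℕ → ℂ) :
    ∑ h, conjG 𝓕 (x h : Germ 𝓕 ℂ) * (y h : Germ 𝓕 ℂ) =
      ↑(fun n => ∑ h, conj (x h n) * y h n) := by
  calc ∑ h, conjG 𝓕 (x h : Germ 𝓕 ℂ) * (y h : Germ 𝓕 ℂ)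
      = ∑ h, Germ.coeRingHom 𝓕 (fun n => conj (x h n) * y h n) :=
        Finset.sum_congr rfl fun h _ => by rw [conjG_coe]; rfl
    _ = _ := by rw [← map_sum, Finset.sum_fn]; rfl

lemma leGerm_absG_sub_conjG {m : ℕ} (γ δ : Fin m → Germ 𝓕 ℂ) {u v : Germ 𝓕 ℝ}
    (hu : toC 𝓕 u = ∑ h, conjG 𝓕 (γ h) * γ h) (hv : toC 𝓕 v = ∑ h, conjG 𝓕 (δ h) * δ h) :
    leGerm 𝓕 (absG 𝓕 ((∑ h, conjG 𝓕 (γ h) * δ h) - conjG 𝓕 (∑ h, conjG 𝓕 (γ h) * δ h)) / 2)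
      (sqrtG 𝓕 u * sqrtG 𝓕 v) := by
  have rep (z : Germ 𝓕 ℂ) : ∃ f : ℕ → ℂ, (f : Germ 𝓕 ℂ) = z :=
    Germ.inductionOn z fun f => ⟨f, rfl⟩
  choose g hg using fun h => rep (γ h)
  choose d hd using fun h => rep (δ h)
  obtain rfl : γ = fun h => ↑(g h) := funext fun h => (hg h).symm
  obtain rfl : δ = fun h => ↑(d h) := funext fun h => (hd h).symm
  induction u, v using Germ.inductionOn₂ with | h U V => ?_
  have normSq_eq {x : Fin m → ℕ → ℂ} {X : ℕ → ℝ}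
      (hX : toC 𝓕 (X : Germ 𝓕 ℝ) = ∑ h, conjG 𝓕 (x h : Germ 𝓕 ℂ) * (x h : Germ 𝓕 ℂ)) :
      ∀ᶠ n in 𝓕, X n = ∑ h, ‖x h n‖ ^ 2 := by
    rw [sum_conjG_coe_mul_coe, toC, Germ.map_coe, Germ.coe_eq] at hX
    refine hX.mono fun n hn => Complex.ofReal_injective ?_
    simpa [Complex.conj_mul'] using hn
  rw [sum_conjG_coe_mul_coe, conjG_coe]
  refine leGerm_coe_of_eventually_le <|
    (normSq_eq hu).and (normSq_eq hv) |>.mono fun n ⟨hUn, hVn⟩ => ?_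
  have := Complex.norm_sub_conj_sum_div_two_le (g · n) (d · n)
  rwa [← hUn, ← hVn] at this

variable (I) in
def innerSRight (ψ : StepF 𝓕) : StepF 𝓕 →ₗ[Germ 𝓕 ℂ] Germ 𝓕 ℂ where
  toFun := innerS 𝓕 I ψ
  map_add' χ χ' := by
    rw [innerS, innerS, innerS, ← map_add]
    exact congrArg I (Subtype.ext (mul_add _ _ _))
  map_smul' c χ := by
    rw [innerS, innerS, RingHom.id_apply, ← map_smul]
    exact congrArg I (Subtype.ext (mul_smul_comm c _ _))

lemma innerS_sub_right (ψ χ χ' : StepF 𝓕) :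
    innerS 𝓕 I ψ (χ - χ') = innerS 𝓕 I ψ χ - innerS 𝓕 I ψ χ' :=
  map_sub (innerSRight I ψ) χ χ'

lemma innerS_smul_right (c : Germ 𝓕 ℂ) (ψ χ : StepF 𝓕) :
    innerS 𝓕 I ψ (c • χ) = c * innerS 𝓕 I ψ χ :=
  map_smul (innerSRight I ψ) c χ

lemma conjG_innerS (hI : IsStepIntegral 𝓕 I) (φ χ : StepF 𝓕) :
    conjG 𝓕 (innerS 𝓕 I φ χ) = innerS 𝓕 I χ φ := by
  obtain ⟨m, p, hp, γ, δ, hφ, hχ⟩ := exists_common_partition φ χ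
  rw [innerS_partStep hI hp hφ hχ, innerS_partStep hI hp hχ hφ, ← conjRingHom_apply, map_sum]
  refine Finset.sum_congr rfl fun h _ => ?_
  rw [conjRingHom_apply, conjG_mul, conjG_mul, conjG_ofReal, conjG_conjG, mul_comm (conjG 𝓕 _)]

lemma innerS_sub_left (hI : IsStepIntegral 𝓕 I) (ψ ψ' χ : StepF 𝓕) :
    innerS 𝓕 I (ψ - ψ') χ = innerS 𝓕 I ψ χ - innerS 𝓕 I ψ' χ := by
  rw [← conjG_innerS hI, innerS_sub_right, ← conjRingHom_apply, map_sub, conjRingHom_apply,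
    conjRingHom_apply, conjG_innerS hI, conjG_innerS hI]

lemma innerS_smul_left (hI : IsStepIntegral 𝓕 I) (c : Germ 𝓕 ℂ) (ψ χ : StepF 𝓕) :
    innerS 𝓕 I (c • ψ) χ = conjG 𝓕 c * innerS 𝓕 I ψ χ := by
  rw [← conjG_innerS hI, innerS_smul_right, conjG_mul, conjG_innerS hI]

lemma conjG_innerS_of_isHermitianOp (hI : IsStepIntegral 𝓕 I)
    {A : StepF 𝓕 →ₗ[Germ 𝓕 ℂ] StepF 𝓕} (hA : IsHermitianOp 𝓕 I A) (ψ : StepF 𝓕) :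
    conjG 𝓕 (innerS 𝓕 I ψ (A ψ)) = innerS 𝓕 I ψ (A ψ) := by
  rw [conjG_innerS hI, hA]

lemma innerS_sub_expectation_smul (hI : IsStepIntegral 𝓕 I)
    {A : StepF 𝓕 →ₗ[Germ 𝓕 ℂ] StepF 𝓕} (hA : IsHermitianOp 𝓕 I A) (B : StepF 𝓕 →ₗ[Germ 𝓕 ℂ] StepF 𝓕)
    {ψ : StepF 𝓕} (hψ : innerS 𝓕 I ψ ψ = 1) :
    innerS 𝓕 I (A ψ - innerS 𝓕 I ψ (A ψ) • ψ) (B ψ - innerS 𝓕 I ψ (B ψ) • ψ) =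
      innerS 𝓕 I (A ψ) (B ψ) - innerS 𝓕 I ψ (A ψ) * innerS 𝓕 I ψ (B ψ) := by
  simp only [innerS_sub_left hI, innerS_sub_right, innerS_smul_left hI, innerS_smul_right,
    conjG_innerS_of_isHermitianOp hI hA, hA ψ ψ, hψ]
  ring

end

/-- Extended Heisenberg Uncertainty Relation, Theorem 2.1:
for Hermitian `A, B` and a state `ψ` with `⟨ψ, ψ⟩ = 1`,
`Δ_ψA · Δ_ψB ≥ |⟨[A, B]⟩_ψ| / 2` in `ℝ_𝓕`, where `Δ_ψA = sqrt(⟨A²⟩_ψ − ⟨A⟩_ψ²)`,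
the variances `⟨A²⟩_ψ − ⟨A⟩_ψ²`, `⟨B²⟩_ψ − ⟨B⟩_ψ²` being regarded as elements
`u, v` of `ℝ_𝓕` via the embedding `ℝ_𝓕 → ℂ_𝓕`. -/
theorem stmt_17 (𝓕 : Filter ℕ)
    (I : StepF 𝓕 →ₗ[Filter.Germ 𝓕 ℂ] Filter.Germ 𝓕 ℂ) (hI : IsStepIntegral 𝓕 I)
    (A B : StepF 𝓕 →ₗ[Filter.Germ 𝓕 ℂ] StepF 𝓕)
    (hA : IsHermitianOp 𝓕 I A) (hB : IsHermitianOp 𝓕 I B)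
    (ψ : StepF 𝓕) (hψ : innerS 𝓕 I ψ ψ = 1)
    (u v : Filter.Germ 𝓕 ℝ)
    (hu : toC 𝓕 u = innerS 𝓕 I ψ (A (A ψ)) - (innerS 𝓕 I ψ (A ψ)) ^ 2)
    (hv : toC 𝓕 v = innerS 𝓕 I ψ (B (B ψ)) - (innerS 𝓕 I ψ (B ψ)) ^ 2) :
    leGerm 𝓕 (absG 𝓕 (innerS 𝓕 I ψ ((A ∘ₗ B - B ∘ₗ A) ψ)) / 2)
      (sqrtG 𝓕 u * sqrtG 𝓕 v) := by
  set φ := A ψ - innerS 𝓕 I ψ (A ψ) • ψ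
  set χ := B ψ - innerS 𝓕 I ψ (B ψ) • ψ
  have variance_A : innerS 𝓕 I φ φ = toC 𝓕 u := by
    rw [innerS_sub_expectation_smul hI hA A hψ, hA, hu, sq]
  have variance_B : innerS 𝓕 I χ χ = toC 𝓕 v := by
    rw [innerS_sub_expectation_smul hI hB B hψ, hB, hv, sq]
  have commutator : innerS 𝓕 I ψ ((A ∘ₗ B - B ∘ₗ A) ψ) =
      innerS 𝓕 I φ χ - conjG 𝓕 (innerS 𝓕 I φ χ) := by
    rw [conjG_innerS hI, innerS_sub_expectation_smul hI hA B hψ,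
      innerS_sub_expectation_smul hI hB A hψ, LinearMap.sub_apply, innerS_sub_right,
      LinearMap.comp_apply, LinearMap.comp_apply, ← hA ψ (B ψ), ← hB ψ (A ψ)]
    ring
  obtain ⟨m, γ, δ, hγ, hδ, hγδ⟩ := exists_innerS_eq_sum_conjG_mul hI φ χ
  rw [commutator, hγδ]
  exact leGerm_absG_sub_conjG γ δ (variance_A.symm.trans hγ) (variance_B.symm.trans hδ)
end
end
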